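/- The function φ₁₁(p,q) = (3p² − 1)/(1 + p²)³·q⁴ + (3/2)·(3p⁴ + 2p² − 1)/(1 + p²)³·q² + (3/2)·p²/(1 + p²) satisfies the equation (1 + p²)φ_pp + 2pq·φ_pq + (1 + q²)φ_qq = 0 for all real p, q. -/
import Mathlib


noncomputable def pd₁ (f : ℝ → ℝ → ℝ) : ℝ → ℝ → ℝ := fun p q => deriv (fun x => f x q) p
noncomputable def pd₂ (f : ℝ → ℝ → ℝ) : ℝ → ℝ → ℝ := fun p q => deriv (fun y => f p y) q

noncomputable def Phi : ℝ → ℝ → ℝ := fun a b =>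
  (3 * a ^ 2 - 1) / (1 + a ^ 2) ^ 3 * b ^ 4
    + (3 / 2) * ((3 * a ^ 4 + 2 * a ^ 2 - 1) / (1 + a ^ 2) ^ 3) * b ^ 2
    + (3 / 2) * (a ^ 2 / (1 + a ^ 2))

lemma one_add_sq_ne (x : ℝ) : (1 : ℝ) + x ^ 2 ≠ 0 := by positivity

lemma one_add_sq_pow_ne (x : ℝ) (n : ℕ) : ((1 : ℝ) + x ^ 2) ^ n ≠ 0 := by positivity

lemma hu (p : ℝ) : HasDerivAt (fun a : ℝ => 1 + a ^ 2) (2 * p) p := by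
  simpa using ((hasDerivAt_pow 2 p).const_add 1)

lemma hp2 (p : ℝ) : HasDerivAt (fun a : ℝ => a ^ 2) (2 * p) p := by
  simpa using hasDerivAt_pow 2 p

lemma pd1_Phi : pd₁ Phi = fun p q =>
    ((3 + 15 * q ^ 2 + 12 * q ^ 4) * p + (6 + 6 * q ^ 2 - 12 * q ^ 4) * p ^ 3
      + (3 - 9 * q ^ 2) * p ^ 5) / (1 + p ^ 2) ^ 4 := by
  funext p q
  have hden : HasDerivAt (fun a : ℝ => (1 + a ^ 2) ^ 3)
      ((3 : ℕ) * (1 + p ^ 2) ^ 2 * (2 * p)) p := (hu p).pow 3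
  have hnum1 : HasDerivAt (fun a : ℝ => 3 * a ^ 2 - 1) (3 * (2 * p)) p :=
    ((hp2 p).const_mul 3).sub_const 1
  have hnum2 : HasDerivAt (fun a : ℝ => 3 * a ^ 4 + 2 * a ^ 2 - 1)
      (3 * ((4 : ℕ) * p ^ 3) + 2 * (2 * p)) p := by
    exact (((hasDerivAt_pow 4 p).const_mul 3).add ((hp2 p).const_mul 2)).sub_const 1
  have t1 := (hnum1.div hden (one_add_sq_pow_ne p 3)).mul_const (q ^ 4)
  have t2 := ((hnum2.div hden (one_add_sq_pow_ne p 3)).const_mul (3 / 2)).mul_const (q ^ 2)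
  have t3 := ((hp2 p).div (hu p) (one_add_sq_ne p)).const_mul (3 / 2)
  have htot := (t1.add t2).add t3
  have hd : deriv (fun x => Phi x q) p = _ := htot.deriv
  show pd₁ Phi p q = _
  rw [pd₁, hd]
  have h1 := one_add_sq_ne p
  field_simp
  ring

lemma pd2_Phi : pd₂ Phi = fun p q =>
    (3 * p ^ 2 - 1) / (1 + p ^ 2) ^ 3 * (4 * q ^ 3)
      + (3 / 2) * ((3 * p ^ 4 + 2 * p ^ 2 - 1) / (1 + p ^ 2) ^ 3) * (2 * q) := by
  funext p q
  have t1 : HasDerivAt (fun b : ℝ => (3 * p ^ 2 - 1) / (1 + p ^ 2) ^ 3 * b ^ 4)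
      ((3 * p ^ 2 - 1) / (1 + p ^ 2) ^ 3 * ((4 : ℕ) * q ^ 3)) q :=
    (hasDerivAt_pow 4 q).const_mul _
  have t2 : HasDerivAt (fun b : ℝ => (3 / 2) * ((3 * p ^ 4 + 2 * p ^ 2 - 1) / (1 + p ^ 2) ^ 3) * b ^ 2)
      ((3 / 2) * ((3 * p ^ 4 + 2 * p ^ 2 - 1) / (1 + p ^ 2) ^ 3) * (2 * q)) q := by
    simpa using (hp2 q).const_mul ((3 / 2) * ((3 * p ^ 4 + 2 * p ^ 2 - 1) / (1 + p ^ 2) ^ 3))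
  have htot := (t1.add t2).add_const ((3 / 2) * (p ^ 2 / (1 + p ^ 2)))
  have hd : deriv (fun y => Phi p y) q = _ := htot.deriv
  show pd₂ Phi p q = _
  rw [pd₂, hd]
  push_cast
  ring

lemma pd1_pd1_Phi (p q : ℝ) : pd₁ (pd₁ Phi) p q =
    (3 + 15 * q ^ 2 + 12 * q ^ 4 - 3 * p ^ 2 - 87 * p ^ 2 * q ^ 2 - 120 * p ^ 2 * q ^ 4
      - 15 * p ^ 4 - 75 * p ^ 4 * q ^ 2 + 60 * p ^ 4 * q ^ 4 - 9 * p ^ 6 + 27 * p ^ 6 * q ^ 2)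
      / (1 + p ^ 2) ^ 5 := by
  rw [pd1_Phi]
  have hden : HasDerivAt (fun a : ℝ => (1 + a ^ 2) ^ 4)
      ((4 : ℕ) * (1 + p ^ 2) ^ 3 * (2 * p)) p := (hu p).pow 4
  have hnum : HasDerivAt (fun a : ℝ => (3 + 15 * q ^ 2 + 12 * q ^ 4) * a
      + (6 + 6 * q ^ 2 - 12 * q ^ 4) * a ^ 3 + (3 - 9 * q ^ 2) * a ^ 5)
      ((3 + 15 * q ^ 2 + 12 * q ^ 4) * 1 + (6 + 6 * q ^ 2 - 12 * q ^ 4) * ((3 : ℕ) * p ^ 2)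
        + (3 - 9 * q ^ 2) * ((5 : ℕ) * p ^ 4)) p := by
    exact (((hasDerivAt_id p).const_mul _).add ((hasDerivAt_pow 3 p).const_mul _)).add
      ((hasDerivAt_pow 5 p).const_mul _)
  have htot := hnum.div hden (one_add_sq_pow_ne p 4)
  have hd : deriv (fun x => ((3 + 15 * q ^ 2 + 12 * q ^ 4) * x + (6 + 6 * q ^ 2 - 12 * q ^ 4) * x ^ 3
      + (3 - 9 * q ^ 2) * x ^ 5) / (1 + x ^ 2) ^ 4) p = _ := htot.deriv
  show pd₁ _ p q = _
  simp only [pd₁]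
  rw [hd]
  have h1 := one_add_sq_ne p
  field_simp
  ring

lemma pd1_pd2_Phi (p q : ℝ) : pd₁ (pd₂ Phi) p q =
    (30 * p * q + 48 * p * q ^ 3 + 12 * p ^ 3 * q - 48 * p ^ 3 * q ^ 3 - 18 * p ^ 5 * q)
      / (1 + p ^ 2) ^ 4 := by
  rw [pd2_Phi]
  have hden : HasDerivAt (fun a : ℝ => (1 + a ^ 2) ^ 3)
      ((3 : ℕ) * (1 + p ^ 2) ^ 2 * (2 * p)) p := (hu p).pow 3
  have hnum1 : HasDerivAt (fun a : ℝ => 3 * a ^ 2 - 1) (3 * (2 * p)) p :=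
    ((hp2 p).const_mul 3).sub_const 1
  have hnum2 : HasDerivAt (fun a : ℝ => 3 * a ^ 4 + 2 * a ^ 2 - 1)
      (3 * ((4 : ℕ) * p ^ 3) + 2 * (2 * p)) p :=
    (((hasDerivAt_pow 4 p).const_mul 3).add ((hp2 p).const_mul 2)).sub_const 1
  have t1 := (hnum1.div hden (one_add_sq_pow_ne p 3)).mul_const (4 * q ^ 3)
  have t2 := ((hnum2.div hden (one_add_sq_pow_ne p 3)).const_mul (3 / 2)).mul_const (2 * q)
  have htot := t1.add t2
  have hd : deriv (fun x => (3 * x ^ 2 - 1) / (1 + x ^ 2) ^ 3 * (4 * q ^ 3)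
      + (3 / 2) * ((3 * x ^ 4 + 2 * x ^ 2 - 1) / (1 + x ^ 2) ^ 3) * (2 * q)) p = _ := htot.deriv
  show pd₁ _ p q = _
  simp only [pd₁]
  rw [hd]
  have h1 := one_add_sq_ne p
  field_simp
  ring

lemma pd2_pd2_Phi (p q : ℝ) : pd₂ (pd₂ Phi) p q =
    (-3 - 12 * q ^ 2 + 6 * p ^ 2 + 36 * p ^ 2 * q ^ 2 + 9 * p ^ 4) / (1 + p ^ 2) ^ 3 := by
  rw [pd2_Phi]
  have t1 : HasDerivAt (fun b : ℝ => (3 * p ^ 2 - 1) / (1 + p ^ 2) ^ 3 * (4 * b ^ 3))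
      ((3 * p ^ 2 - 1) / (1 + p ^ 2) ^ 3 * (4 * ((3 : ℕ) * q ^ 2))) q :=
    ((hasDerivAt_pow 3 q).const_mul 4).const_mul _
  have t2 : HasDerivAt
      (fun b : ℝ => (3 / 2) * ((3 * p ^ 4 + 2 * p ^ 2 - 1) / (1 + p ^ 2) ^ 3) * (2 * b))
      ((3 / 2) * ((3 * p ^ 4 + 2 * p ^ 2 - 1) / (1 + p ^ 2) ^ 3) * (2 * 1)) q :=
    ((hasDerivAt_id q).const_mul 2).const_mul _
  have htot := t1.add t2
  have hd : deriv (fun y => (3 * p ^ 2 - 1) / (1 + p ^ 2) ^ 3 * (4 * y ^ 3)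
      + (3 / 2) * ((3 * p ^ 4 + 2 * p ^ 2 - 1) / (1 + p ^ 2) ^ 3) * (2 * y)) q = _ := htot.deriv
  show pd₂ _ p q = _
  simp only [pd₂]
  rw [hd]
  have h1 := one_add_sq_ne p
  field_simp
  ring

theorem phi_solves_legendre_eq :
    ∀ p q : ℝ,
      (1 + p ^ 2) * pd₁ (pd₁ (fun a b => (3 * a ^ 2 - 1) / (1 + a ^ 2) ^ 3 * b ^ 4 + (3 / 2) * ((3 * a ^ 4 + 2 * a ^ 2 - 1) / (1 + a ^ 2) ^ 3) * b ^ 2 + (3 / 2) * (a ^ 2 / (1 + a ^ 2)))) p q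
        + 2 * p * q * pd₁ (pd₂ (fun a b => (3 * a ^ 2 - 1) / (1 + a ^ 2) ^ 3 * b ^ 4 + (3 / 2) * ((3 * a ^ 4 + 2 * a ^ 2 - 1) / (1 + a ^ 2) ^ 3) * b ^ 2 + (3 / 2) * (a ^ 2 / (1 + a ^ 2)))) p q
        + (1 + q ^ 2) * pd₂ (pd₂ (fun a b => (3 * a ^ 2 - 1) / (1 + a ^ 2) ^ 3 * b ^ 4 + (3 / 2) * ((3 * a ^ 4 + 2 * a ^ 2 - 1) / (1 + a ^ 2) ^ 3) * b ^ 2 + (3 / 2) * (a ^ 2 / (1 + a ^ 2)))) p q = 0 := by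
  intro p q
  show (1 + p ^ 2) * pd₁ (pd₁ Phi) p q + 2 * p * q * pd₁ (pd₂ Phi) p q
      + (1 + q ^ 2) * pd₂ (pd₂ Phi) p q = 0
  rw [pd1_pd1_Phi, pd1_pd2_Phi, pd2_pd2_Phi]
  have h1 := one_add_sq_ne p
  field_simp
  ring
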